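/- Let f, g be continuous on [t₀, τ₀) with f ≥ 0, and let y be a solution of the Riccati equation y' + f(t)y² + g(t) = 0 on an interval (t₁, t₂) ⊆ (t₀, τ₀) that cannot be continued to the right past t₂ < τ₀. Then y(t) → -∞ as t → t₂⁻. -/

import Mathlib

/-!
Since `f ≥ 0` and `g` is bounded near `t₂`, `y' ≤ -g ≤ M` there, so `y t - M t` is antitone and
`y` has a limit in `[-∞, ∞)` at `t₂⁻`. If that limit were a finite `L`, the Picard–Lindelöf
solution `z` with `z t₂ = L` would continue `y` past `t₂`: the glued function is differentiable
at `t₂` because its left derivative is the limit of `y' t = -(f t y² + g t)`, namely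
`-(f t₂ L² + g t₂)`, which is also the right derivative of `z`.
-/

open Set Filter Metric Topology

lemma AntitoneOn.tendsto_atBot_or_tendsto_nhdsLT {α β : Type*} [LinearOrder α]
    [TopologicalSpace α] [OrderTopology α] [DenselyOrdered α] [ConditionallyCompleteLinearOrder β]
    [TopologicalSpace β] [OrderTopology β] {u : α → β} {a b : α} (hab : a < b)
    (hu : AntitoneOn u (Ioo a b)) :
    Tendsto u (𝓝[<] b) atBot ∨ ∃ L, Tendsto u (𝓝[<] b) (𝓝 L) := by
  by_cases hbdd : BddBelow (u '' Ioo a b)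
  · exact .inr ⟨_, hu.tendsto_nhdsWithin_Ioo_left (nonempty_Ioo.2 hab) hbdd⟩
  refine .inl (tendsto_atBot.2 fun B => ?_)
  obtain ⟨_, ⟨s, hs, rfl⟩, hsB⟩ := not_bddBelow_iff.1 hbdd B
  filter_upwards [Ioo_mem_nhdsLT hs.2] with t ht
  exact (hu hs ⟨hs.1.trans ht.1, ht.2⟩ ht.1.le).trans hsB.le

lemma tendsto_atBot_or_tendsto_nhdsLT_of_hasDerivAt_le {y y' : ℝ → ℝ} {a b M : ℝ}
    (hab : a < b) (hy : ∀ t ∈ Ioo a b, HasDerivAt y (y' t) t)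
    (hM : ∀ t ∈ Ioo a b, y' t ≤ M) :
    Tendsto y (𝓝[<] b) atBot ∨ ∃ L, Tendsto y (𝓝[<] b) (𝓝 L) := by
  have hu' : ∀ t ∈ Ioo a b, HasDerivAt (fun t => y t - M * t) (y' t - M) t := fun t ht =>
    (hy t ht).sub (by simpa using (hasDerivAt_id t).const_mul M)
  have hu : AntitoneOn (fun t => y t - M * t) (Ioo a b) := by
    refine antitoneOn_of_hasDerivWithinAt_nonpos (f' := fun t => y' t - M) (convex_Ioo a b)
      (fun t ht => (hu' t ht).continuousAt.continuousWithinAt) (fun t ht => ?_) (fun t ht => ?_)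
    · rw [interior_Ioo] at ht ⊢
      exact (hu' t ht).hasDerivWithinAt
    · rw [interior_Ioo] at ht
      linarith [hM t ht]
  have hlin : Tendsto (fun t => M * t) (𝓝[<] b) (𝓝 (M * b)) :=
    (continuous_const.mul continuous_id).continuousWithinAt
  rcases hu.tendsto_atBot_or_tendsto_nhdsLT hab with hbot | ⟨L, hL⟩
  · exact .inl (by simpa using hbot.atBot_add hlin)
  · exact .inr ⟨L + M * b, by simpa using hL.add hlin⟩

section Glue

variable {E : Type*} [NormedAddCommGroup E] [NormedSpace ℝ E]

lemma hasDerivAt_ite_lt_of_tendsto {y y' z : ℝ → E} {a b : ℝ} {L d : E} (hab : a < b)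
    (hy : ∀ t ∈ Ioo a b, HasDerivAt y (y' t) t) (hyL : Tendsto y (𝓝[<] b) (𝓝 L))
    (hy' : Tendsto y' (𝓝[<] b) (𝓝 d)) (hz : HasDerivWithinAt z d (Ici b) b) (hzb : z b = L) :
    HasDerivAt (fun t => if t < b then y t else z t) d b := by
  set Z := fun t => if t < b then y t else z t
  have hZy : ∀ t ∈ Ioo a b, Z =ᶠ[𝓝 t] y := fun t ht => by
    filter_upwards [Iio_mem_nhds ht.2] with s hs
    exact if_pos hs
  have hleft : HasDerivWithinAt Z d (Iic b) b := by
    refine hasDerivWithinAt_Iic_of_tendsto_deriv (s := Ioo a b)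
      (fun t ht => ((hy t ht).congr_of_eventuallyEq (hZy t ht)).differentiableAt
        |>.differentiableWithinAt) ?_ (Ioo_mem_nhdsLT hab) ?_
    · rw [ContinuousWithinAt, nhdsWithin_Ioo_eq_nhdsLT hab, show Z b = L by simp [Z, hzb]]
      exact hyL.congr' (eventually_nhdsWithin_of_forall fun t ht => (if_pos ht).symm)
    · refine hy'.congr' ?_
      filter_upwards [Ioo_mem_nhdsLT hab] with t ht
      exact ((hy t ht).congr_of_eventuallyEq (hZy t ht)).deriv.symm
  have hright : HasDerivWithinAt Z d (Ici b) b :=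
    hz.congr_of_mem (fun t ht => if_neg (not_lt.2 ht)) self_mem_Ici
  simpa [Iic_union_Ici] using hleft.union hright

lemma hasDerivAt_ite_lt_of_solutions {v : ℝ → E → E} {y z : ℝ → E} {a b c : ℝ} {L : E}
    (hab : a < b) (hbc : b < c) (hy : ∀ t ∈ Ioo a b, HasDerivAt y (v t (y t)) t)
    (hyL : Tendsto y (𝓝[<] b) (𝓝 L)) (hvL : Tendsto (fun t => v t (y t)) (𝓝[<] b) (𝓝 (v b L)))
    (hz : ∀ t ∈ Icc b c, HasDerivWithinAt z (v t (z t)) (Icc b c) t) (hzb : z b = L) :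
    ∀ t ∈ Ioo a c, HasDerivAt (fun s => if s < b then y s else z s)
      (v t (if t < b then y t else z t)) t := by
  intro t ht
  rcases lt_trichotomy t b with htb | rfl | hbt
  · rw [if_pos htb]
    refine (hy t ⟨ht.1, htb⟩).congr_of_eventuallyEq ?_
    filter_upwards [Iio_mem_nhds htb] with s hs
    exact if_pos hs
  · have hzR := (hz t (left_mem_Icc.2 hbc.le)).mono_of_mem_nhdsWithin (Icc_mem_nhdsGE hbc)
    rw [hzb] at hzR
    rw [if_neg (lt_irrefl t), hzb]
    exact hasDerivAt_ite_lt_of_tendsto hab hy hyL hvL hzR hzb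
  · rw [if_neg (not_lt.2 hbt.le)]
    refine ((hz t ⟨hbt.le, ht.2.le⟩).hasDerivAt (Icc_mem_nhds hbt ht.2)).congr_of_eventuallyEq ?_
    filter_upwards [Ioi_mem_nhds hbt] with s hs
    exact if_neg (not_lt.2 (le_of_lt hs))

end Glue

lemma lipschitzOnWith_riccati {c d F R : ℝ} (hc : |c| ≤ F) :
    LipschitzOnWith (2 * F * R).toNNReal (fun x : ℝ => -(c * x ^ 2 + d)) (closedBall 0 R) := by
  refine LipschitzOnWith.of_dist_le_mul fun x hx x' hx' => ?_
  rw [mem_closedBall_zero_iff, Real.norm_eq_abs] at hx hx'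
  have hF : 0 ≤ F := (abs_nonneg c).trans hc
  have hR : 0 ≤ R := (abs_nonneg x).trans hx
  rw [Real.coe_toNNReal _ (by positivity), Real.dist_eq, Real.dist_eq]
  calc |-(c * x ^ 2 + d) - -(c * x' ^ 2 + d)| = |c| * |x + x'| * |x - x'| := by
        rw [← abs_mul, ← abs_mul, ← abs_neg]
        ring_nf
    _ ≤ F * (2 * R) * |x - x'| := by
        gcongr
        exact (abs_add_le x x').trans (by linarith)
    _ = 2 * F * R * |x - x'| := by ring

/-- Picard–Lindelöf on the ball of radius `1` about `x₀`, where the field is bounded by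
`C = F R² + G`, over a time interval of length at most `1 / (C + 1)`. -/
lemma exists_riccati_solution_Icc {f g : ℝ → ℝ} {a b : ℝ} (hab : a < b)
    (hf : ContinuousOn f (Icc a b)) (hg : ContinuousOn g (Icc a b)) (x₀ : ℝ) :
    ∃ c ∈ Ioc a b, ∃ z : ℝ → ℝ, z a = x₀ ∧
      ∀ t ∈ Icc a c, HasDerivWithinAt z (-(f t * z t ^ 2 + g t)) (Icc a c) t := by
  obtain ⟨F, hF⟩ := isCompact_Icc.exists_bound_of_continuousOn hf
  obtain ⟨G, hG⟩ := isCompact_Icc.exists_bound_of_continuousOn hg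
  have hF0 : 0 ≤ F := (norm_nonneg _).trans (hF a (left_mem_Icc.2 hab.le))
  have hG0 : 0 ≤ G := (norm_nonneg _).trans (hG a (left_mem_Icc.2 hab.le))
  set R := |x₀| + 1
  set C := F * R ^ 2 + G
  have hC0 : 0 ≤ C := by positivity
  set c := min b (a + 1 / (C + 1))
  have hac : a < c := lt_min hab (by simp only [lt_add_iff_pos_right]; positivity)
  have hsub : Icc a c ⊆ Icc a b := Icc_subset_Icc_right (min_le_left _ _)
  have hball : closedBall x₀ 1 ⊆ closedBall 0 R :=
    closedBall_subset_closedBall' (by rw [Real.dist_0_eq_abs]; linarith)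
  have hPL : IsPicardLindelof (fun t x => -(f t * x ^ 2 + g t)) (tmin := a) (tmax := c)
      ⟨a, left_mem_Icc.2 hac.le⟩ x₀ 1 0 C.toNNReal (2 * F * R).toNNReal := by
    refine ⟨fun t ht => ?_, fun x _ => ?_, fun t ht x hx => ?_, ?_⟩
    · rw [NNReal.coe_one]
      exact (lipschitzOnWith_riccati (by simpa using hF t (hsub ht))).mono hball
    · exact ((hf.mul continuousOn_const).add hg).neg.mono hsub
    · have hx : ‖x‖ ≤ R := by simpa using hball hx
      rw [Real.coe_toNNReal _ hC0, norm_neg]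
      calc ‖f t * x ^ 2 + g t‖ ≤ ‖f t‖ * ‖x‖ ^ 2 + ‖g t‖ := by
            rw [← norm_pow, ← norm_mul]
            exact norm_add_le _ _
        _ ≤ F * R ^ 2 + G := by gcongr <;> [exact hF t (hsub ht); exact hG t (hsub ht)]
    · simp only [Real.coe_toNNReal _ hC0, NNReal.coe_one, NNReal.coe_zero, sub_zero, sub_self]
      rw [max_eq_left (by linarith)]
      calc C * (c - a) ≤ C * (1 / (C + 1)) := by
            gcongr
            linarith [min_le_right b (a + 1 / (C + 1))]
        _ ≤ 1 := by rw [mul_one_div, div_le_one (by positivity)]; linarith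
  obtain ⟨z, hz₀, hz⟩ := hPL.exists_eq_forall_mem_Icc_hasDerivWithinAt₀
  exact ⟨c, ⟨hac, min_le_left _ _⟩, z, hz₀, hz⟩

/-- Remark 2.3: if a solution `y` of `y' + f y² + g = 0` (`f ≥ 0`) on `(t₁,t₂) ⊆ (t₀,τ₀)`
cannot be continued to the right past `t₂ < τ₀`, then `y(t) → -∞` as `t → t₂⁻`. -/
theorem riccati_blowup_not_continuable_right
    (t₀ τ₀ : ℝ) (f g : ℝ → ℝ)
    (hf : ContinuousOn f (Ico t₀ τ₀)) (hg : ContinuousOn g (Ico t₀ τ₀))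
    (hf0 : ∀ t ∈ Ico t₀ τ₀, 0 ≤ f t)
    (t₁ t₂ : ℝ) (h01 : t₀ ≤ t₁) (h12 : t₁ < t₂) (h2τ : t₂ < τ₀)
    (y : ℝ → ℝ)
    (hy : ∀ t ∈ Ioo t₁ t₂, HasDerivAt y (-(f t * y t ^ 2 + g t)) t)
    -- `y` is not continuable to the right from `t₂`
    (hnc : ¬ ∃ t₂' : ℝ, t₂ < t₂' ∧ t₂' ≤ τ₀ ∧
      ∃ z : ℝ → ℝ, (∀ t ∈ Ioo t₁ t₂, z t = y t) ∧
        ∀ t ∈ Ioo t₁ t₂', HasDerivAt z (-(f t * z t ^ 2 + g t)) t) :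
    Tendsto y (nhdsWithin t₂ (Iio t₂)) atBot := by
  by_contra hbot
  have hsub : Icc t₁ t₂ ⊆ Ico t₀ τ₀ := Icc_subset_Ico h01 h2τ
  obtain ⟨G, hG⟩ := isCompact_Icc.exists_bound_of_continuousOn (hg.mono hsub)
  have hy'_le : ∀ t ∈ Ioo t₁ t₂, -(f t * y t ^ 2 + g t) ≤ G := fun t ht => by
    have hfy := mul_nonneg (hf0 t (hsub (Ioo_subset_Icc_self ht))) (sq_nonneg (y t))
    have hgt := (neg_le_abs (g t)).trans (hG t (Ioo_subset_Icc_self ht))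
    linarith
  obtain ⟨L, hL⟩ :=
    (tendsto_atBot_or_tendsto_nhdsLT_of_hasDerivAt_le h12 hy hy'_le).resolve_left hbot
  have ht₂ : Ico t₀ τ₀ ∈ 𝓝 t₂ := Ico_mem_nhds (h01.trans_lt h12) h2τ
  have hvL : Tendsto (fun t => -(f t * y t ^ 2 + g t)) (𝓝[<] t₂)
      (𝓝 (-(f t₂ * L ^ 2 + g t₂))) :=
    (((hf.continuousAt ht₂).continuousWithinAt.tendsto.mul (hL.pow 2)).add
      (hg.continuousAt ht₂).continuousWithinAt.tendsto).neg
  obtain ⟨τ, h2τ', hτ⟩ := exists_between h2τ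
  have hsub' : Icc t₂ τ ⊆ Ico t₀ τ₀ := Icc_subset_Ico (h01.trans h12.le) hτ
  obtain ⟨c, hc, z, hz₀, hz⟩ := exists_riccati_solution_Icc h2τ'
    (hf.mono hsub') (hg.mono hsub') L
  exact hnc ⟨c, hc.1, hc.2.trans hτ.le, fun s => if s < t₂ then y s else z s,
    fun t ht => if_pos ht.2,
    hasDerivAt_ite_lt_of_solutions (v := fun t x => -(f t * x ^ 2 + g t)) h12 hc.1 hy hL hvL hz hz₀⟩
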